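/- Let R > 0, M ≥ 1 an integer, and s ∈ [0, 1]. Then: (i) for all n ≥ 2, (1 − Q_n(s))^M ≤ exp( − (M κ_n/(n − 1)) (1 − s²)^{(n−1)/2} ); and (ii) for all n ≥ 3, 1 − (1 − Q_n(s))^M ≤ M κ_n (1 − s²)^{(n−1)/2}. Equivalently, for a random variable S with CDF (1 − Q_n(s))^M these are the bounds P(S ≤ s) ≤ exp(−(Mκ_n/(n−1))(1−s²)^{(n−1)/2}) and P(S ≥ s) ≤ Mκ_n(1−s²)^{(n−1)/2}. -/

import Mathlib

/-!
The substitution `u = t ^ 2` turns `∫₀¹ (1 - t²)^p dt` into `B(1/2, p + 1) / 2`, and with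
`p = (n - 3)/2` this says exactly `Q_n(0) = 1/2`; hence `0 ≤ Q_n(s) ≤ 1/2` on `[0, 1]`.
Bounding the integrand below by `t (1 - t²)^p`, which has an explicit primitive, gives
`c := κ_n (1 - s²)^{(n-1)/2} / (n - 1) ≤ Q_n(s)`, so `(1 - Q_n(s))^M ≤ (1 - c)^M ≤ e^{-Mc}`.
For `n ≥ 3` the integrand is at most `(1 - s²)^p` on `[s, 1]` and `1 - s ≤ 1 - s²`, so
`Q_n(s) ≤ κ_n (1 - s²)^{(n-1)/2}`, and Bernoulli's inequality gives `1 - (1 - Q)^M ≤ M Q`.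
-/

open MeasureTheory Real

noncomputable section

/-- The normalizing constant `κ_n = Γ(n/2)/(√π·Γ((n-1)/2))`. -/
def kappaConst (n : ℕ) : ℝ :=
  Real.Gamma ((n : ℝ) / 2) / (Real.sqrt Real.pi * Real.Gamma (((n : ℝ) - 1) / 2))

/-- `Q_n(g) = κ_n ∫_g^1 (1 - t²)^{(n-3)/2} dt`. -/
def Qfun (n : ℕ) (g : ℝ) : ℝ :=
  kappaConst n * ∫ t in g..1, (1 - t ^ 2) ^ (((n : ℝ) - 3) / 2)

end

open Set ProbabilityTheory

section Beta

variable {α β : ℝ}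

lemma lintegral_rpow_mul_one_sub_rpow (hα : 0 < α) (hβ : 0 < β) :
    ∫⁻ x in Ioo 0 1, ENNReal.ofReal (x ^ (α - 1) * (1 - x) ^ (β - 1)) =
      ENNReal.ofReal (beta α β) := by
  have h := lintegral_betaPDF_eq_one hα hβ
  have hB := beta_pos hα hβ
  simp_rw [lintegral_betaPDF, mul_assoc, ENNReal.ofReal_mul (one_div_pos.2 hB).le] at h
  rw [lintegral_const_mul' _ _ ENNReal.ofReal_ne_top] at h
  rw [← ENNReal.eq_div_iff (by simpa using hB) ENNReal.ofReal_ne_top] at h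
  rw [h, ← ENNReal.ofReal_one, ← ENNReal.ofReal_div_of_pos (by positivity)]
  simp

lemma integrableOn_rpow_mul_one_sub_rpow (hα : 0 < α) (hβ : 0 < β) :
    IntegrableOn (fun x : ℝ ↦ x ^ (α - 1) * (1 - x) ^ (β - 1)) (Ioo 0 1) := by
  refine ⟨by fun_prop, ?_⟩
  rw [hasFiniteIntegral_iff_ofReal]
  · rw [lintegral_rpow_mul_one_sub_rpow hα hβ]; exact ENNReal.ofReal_lt_top
  · filter_upwards [ae_restrict_mem measurableSet_Ioo] with x hx
    exact mul_nonneg (rpow_nonneg hx.1.le _) (rpow_nonneg (sub_nonneg.2 hx.2.le) _)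

lemma integral_rpow_mul_one_sub_rpow (hα : 0 < α) (hβ : 0 < β) :
    ∫ x in Ioo 0 1, x ^ (α - 1) * (1 - x) ^ (β - 1) = beta α β := by
  rw [integral_eq_lintegral_of_nonneg_ae, lintegral_rpow_mul_one_sub_rpow hα hβ,
    ENNReal.toReal_ofReal (beta_pos hα hβ).le]
  · filter_upwards [ae_restrict_mem measurableSet_Ioo] with x hx
    exact mul_nonneg (rpow_nonneg hx.1.le _) (rpow_nonneg (sub_nonneg.2 hx.2.le) _)
  · fun_prop

end Beta

lemma sq_image_Ioo_zero_one : (fun t : ℝ ↦ t ^ 2) '' Ioo 0 1 = Ioo 0 1 := by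
  ext u
  constructor
  · rintro ⟨t, ⟨ht0, ht1⟩, rfl⟩
    exact ⟨by positivity, by nlinarith⟩
  · rintro ⟨hu0, hu1⟩
    exact ⟨√u, ⟨sqrt_pos.2 hu0, (sqrt_lt' one_pos).2 (by simpa using hu1)⟩,
      sq_sqrt hu0.le⟩

lemma injOn_sq_Ioo_zero_one : InjOn (fun t : ℝ ↦ t ^ 2) (Ioo 0 1) :=
  (pow_left_strictMonoOn₀ two_ne_zero).injOn.mono fun _ ht ↦ mem_Ici.2 ht.1.le

lemma abs_two_mul_smul_eqOn_Ioo (g : ℝ → ℝ) :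
    EqOn (fun t ↦ |(2 : ℝ) * t| • g (t ^ 2)) (fun t ↦ 2 * t * g (t ^ 2)) (Ioo 0 1) := by
  intro t ht
  simp only [smul_eq_mul, abs_of_pos (mul_pos two_pos ht.1)]

lemma integrableOn_Ioo_zero_one_iff_comp_sq (g : ℝ → ℝ) :
    IntegrableOn g (Ioo 0 1) ↔ IntegrableOn (fun t ↦ 2 * t * g (t ^ 2)) (Ioo 0 1) := by
  conv_lhs => rw [← sq_image_Ioo_zero_one]
  rw [integrableOn_image_iff_integrableOn_abs_deriv_smul measurableSet_Ioo
    (f' := fun t ↦ 2 * t) (fun t _ ↦ by simpa using hasDerivWithinAt_pow 2 t)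
    injOn_sq_Ioo_zero_one]
  exact integrableOn_congr_fun (abs_two_mul_smul_eqOn_Ioo g) measurableSet_Ioo

lemma integral_Ioo_zero_one_eq_integral_comp_sq (g : ℝ → ℝ) :
    ∫ u in Ioo 0 1, g u = ∫ t in Ioo 0 1, 2 * t * g (t ^ 2) := by
  conv_lhs => rw [← sq_image_Ioo_zero_one]
  rw [integral_image_eq_integral_abs_deriv_smul measurableSet_Ioo
    (f' := fun t ↦ 2 * t) (fun t _ ↦ by simpa using hasDerivWithinAt_pow 2 t)
    injOn_sq_Ioo_zero_one]
  exact setIntegral_congr_fun measurableSet_Ioo (abs_two_mul_smul_eqOn_Ioo g)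

section OneSubSqRpow

variable {p s : ℝ}

lemma two_mul_mul_rpow_mul_one_sub_rpow_sq {t : ℝ} (ht : 0 < t) :
    2 * t * ((t ^ 2) ^ (1 / 2 - 1 : ℝ) * (1 - t ^ 2) ^ (p + 1 - 1)) = 2 * (1 - t ^ 2) ^ p := by
  rw [add_sub_cancel_right, show (1 / 2 - 1 : ℝ) = -1 / 2 by norm_num, ← rpow_natCast,
    ← rpow_mul ht.le]
  norm_num
  rw [rpow_neg_one]
  field_simp

lemma integrableOn_one_sub_sq_rpow (hp : -1 < p) :
    IntegrableOn (fun t : ℝ ↦ (1 - t ^ 2) ^ p) (Ioo 0 1) := by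
  have h := integrableOn_rpow_mul_one_sub_rpow one_half_pos (by linarith : 0 < p + 1)
  rw [integrableOn_Ioo_zero_one_iff_comp_sq] at h
  have h2 := h.congr_fun (fun t ht ↦ two_mul_mul_rpow_mul_one_sub_rpow_sq ht.1) measurableSet_Ioo
  simpa [IntegrableOn] using h2.div_const 2

lemma integral_one_sub_sq_rpow_zero_one (hp : -1 < p) :
    ∫ t in (0 : ℝ)..1, (1 - t ^ 2) ^ p = beta (1 / 2) (p + 1) / 2 := by
  rw [intervalIntegral.integral_of_le zero_le_one, integral_Ioc_eq_integral_Ioo,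
    ← integral_rpow_mul_one_sub_rpow one_half_pos (by linarith : 0 < p + 1),
    integral_Ioo_zero_one_eq_integral_comp_sq
      (fun u ↦ u ^ (1 / 2 - 1 : ℝ) * (1 - u) ^ (p + 1 - 1)),
    setIntegral_congr_fun measurableSet_Ioo
      (fun t ht ↦ two_mul_mul_rpow_mul_one_sub_rpow_sq ht.1),
    integral_const_mul]
  ring

lemma intervalIntegrable_one_sub_sq_rpow (hp : -1 < p) {a b : ℝ} (ha : a ∈ Icc (0 : ℝ) 1)
    (hb : b ∈ Icc (0 : ℝ) 1) :
    IntervalIntegrable (fun t : ℝ ↦ (1 - t ^ 2) ^ p) volume a b := by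
  have h : IntervalIntegrable (fun t : ℝ ↦ (1 - t ^ 2) ^ p) volume 0 1 := by
    rw [intervalIntegrable_iff_integrableOn_Ioo_of_le zero_le_one]
    exact integrableOn_one_sub_sq_rpow hp
  exact h.mono_set (by rw [uIcc_of_le zero_le_one]; exact uIcc_subset_Icc ha hb)

lemma hasDerivAt_one_sub_sq_rpow_add_one (hp : -1 < p) {t : ℝ} (ht : t ∈ Ioo (-1 : ℝ) 1) :
    HasDerivAt (fun t : ℝ ↦ -(1 - t ^ 2) ^ (p + 1) / (2 * (p + 1)))
      (t * (1 - t ^ 2) ^ p) t := by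
  have hpos : 0 < 1 - t ^ 2 := by nlinarith [ht.1, ht.2]
  have hp1 : p + 1 ≠ 0 := by linarith
  have h := (((hasDerivAt_pow 2 t).const_sub 1).rpow_const (p := p + 1)
    (Or.inl hpos.ne')).fun_neg.div_const (2 * (p + 1))
  refine h.congr_deriv ?_
  rw [add_sub_cancel_right]
  push_cast
  field_simp

lemma integral_mul_one_sub_sq_rpow (hp : -1 < p) (hs : s ∈ Icc (0 : ℝ) 1) :
    ∫ t in s..1, t * (1 - t ^ 2) ^ p = (1 - s ^ 2) ^ (p + 1) / (2 * (p + 1)) := by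
  rw [intervalIntegral.integral_eq_sub_of_hasDerivAt_of_le hs.2
    (((continuous_const.sub (continuous_pow 2)).rpow_const
      fun _ ↦ Or.inr (by linarith)).neg.div_const _).continuousOn
    (fun t ht ↦ hasDerivAt_one_sub_sq_rpow_add_one hp ⟨by linarith [hs.1, ht.1], ht.2⟩)
    ((intervalIntegrable_one_sub_sq_rpow hp hs ⟨zero_le_one, le_rfl⟩).continuousOn_mul
      continuousOn_id)]
  simp [zero_rpow (by linarith : p + 1 ≠ 0)]
  ring

lemma div_le_integral_one_sub_sq_rpow (hp : -1 < p) (hs : s ∈ Icc (0 : ℝ) 1) :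
    (1 - s ^ 2) ^ (p + 1) / (2 * (p + 1)) ≤ ∫ t in s..1, (1 - t ^ 2) ^ p := by
  rw [← integral_mul_one_sub_sq_rpow hp hs]
  refine intervalIntegral.integral_mono_on hs.2
    ((intervalIntegrable_one_sub_sq_rpow hp hs ⟨zero_le_one, le_rfl⟩).continuousOn_mul
      continuousOn_id)
    (intervalIntegrable_one_sub_sq_rpow hp hs ⟨zero_le_one, le_rfl⟩) fun t ht ↦ ?_
  have : 0 ≤ (1 - t ^ 2) ^ p := rpow_nonneg (by nlinarith [hs.1, ht.1, ht.2]) _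
  nlinarith [ht.2]

lemma integral_one_sub_sq_rpow_le (hp : 0 ≤ p) (hs : s ∈ Icc (0 : ℝ) 1) :
    ∫ t in s..1, (1 - t ^ 2) ^ p ≤ (1 - s ^ 2) ^ (p + 1) := by
  have hs2 : 0 ≤ 1 - s ^ 2 := by nlinarith [hs.1, hs.2]
  calc ∫ t in s..1, (1 - t ^ 2) ^ p ≤ ∫ _ in s..1, (1 - s ^ 2) ^ p :=
        intervalIntegral.integral_mono_on hs.2
          (intervalIntegrable_one_sub_sq_rpow (by linarith) hs ⟨zero_le_one, le_rfl⟩)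
          intervalIntegrable_const fun t ht ↦
            rpow_le_rpow (by nlinarith [hs.1, ht.1, ht.2]) (by nlinarith [hs.1, ht.1]) hp
    _ = (1 - s) * (1 - s ^ 2) ^ p := by simp
    _ ≤ (1 - s ^ 2) * (1 - s ^ 2) ^ p := by
        gcongr
        nlinarith [mul_nonneg hs.1 (sub_nonneg.2 hs.2)]
    _ = (1 - s ^ 2) ^ (p + 1) := by rw [rpow_add_one' hs2 (by linarith), mul_comm]

end OneSubSqRpow

section Qfun

variable {n : ℕ}

lemma neg_one_lt_sub_three_div_two (hn : 2 ≤ n) : -1 < ((n : ℝ) - 3) / 2 := by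
  have : (2 : ℝ) ≤ n := by exact_mod_cast hn
  linarith

lemma sub_three_div_two_add_one (n : ℕ) : ((n : ℝ) - 3) / 2 + 1 = ((n : ℝ) - 1) / 2 := by ring

lemma kappaConst_pos (hn : 2 ≤ n) : 0 < kappaConst n := by
  have : (2 : ℝ) ≤ n := by exact_mod_cast hn
  unfold kappaConst
  have := Gamma_pos_of_pos (by linarith : (0 : ℝ) < n / 2)
  have := Gamma_pos_of_pos (by linarith : (0 : ℝ) < (n - 1) / 2)
  positivity

lemma kappaConst_mul_beta (hn : 2 ≤ n) :
    kappaConst n * beta (1 / 2) (((n : ℝ) - 1) / 2) = 1 := by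
  have : (2 : ℝ) ≤ n := by exact_mod_cast hn
  have := Gamma_pos_of_pos (by linarith : (0 : ℝ) < n / 2)
  have := Gamma_pos_of_pos (by linarith : (0 : ℝ) < (n - 1) / 2)
  rw [kappaConst, beta, Gamma_one_half_eq, show 1 / 2 + ((n : ℝ) - 1) / 2 = n / 2 by ring]
  field_simp

lemma Qfun_zero (hn : 2 ≤ n) : Qfun n 0 = 1 / 2 := by
  rw [Qfun, integral_one_sub_sq_rpow_zero_one (neg_one_lt_sub_three_div_two hn),
    sub_three_div_two_add_one, ← mul_div_assoc, kappaConst_mul_beta hn]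

lemma Qfun_le_half (hn : 2 ≤ n) (hs : s ∈ Icc (0 : ℝ) 1) : Qfun n s ≤ 1 / 2 := by
  rw [← Qfun_zero hn]
  refine mul_le_mul_of_nonneg_left ?_ (kappaConst_pos hn).le
  refine intervalIntegral.integral_mono_interval hs.1 hs.2 le_rfl ?_
    (intervalIntegrable_one_sub_sq_rpow (neg_one_lt_sub_three_div_two hn) ⟨le_rfl, zero_le_one⟩
      ⟨zero_le_one, le_rfl⟩)
  filter_upwards [ae_restrict_mem measurableSet_Ioc] with t ht
  exact rpow_nonneg (by nlinarith [ht.1, ht.2]) _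

lemma kappaConst_div_mul_le_Qfun (hn : 2 ≤ n) (hs : s ∈ Icc (0 : ℝ) 1) :
    kappaConst n / ((n : ℝ) - 1) * (1 - s ^ 2) ^ (((n : ℝ) - 1) / 2) ≤ Qfun n s := by
  have h := div_le_integral_one_sub_sq_rpow (neg_one_lt_sub_three_div_two hn) hs
  rw [sub_three_div_two_add_one, show 2 * (((n : ℝ) - 1) / 2) = n - 1 by ring] at h
  calc kappaConst n / ((n : ℝ) - 1) * (1 - s ^ 2) ^ (((n : ℝ) - 1) / 2)
      = kappaConst n * ((1 - s ^ 2) ^ (((n : ℝ) - 1) / 2) / ((n : ℝ) - 1)) := by ring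
    _ ≤ Qfun n s := mul_le_mul_of_nonneg_left h (kappaConst_pos hn).le

lemma Qfun_le_kappaConst_mul (hn : 3 ≤ n) (hs : s ∈ Icc (0 : ℝ) 1) :
    Qfun n s ≤ kappaConst n * (1 - s ^ 2) ^ (((n : ℝ) - 1) / 2) := by
  have : (3 : ℝ) ≤ n := by exact_mod_cast hn
  have h := integral_one_sub_sq_rpow_le (p := ((n : ℝ) - 3) / 2) (by linarith) hs
  rw [sub_three_div_two_add_one] at h
  exact mul_le_mul_of_nonneg_left h (kappaConst_pos (by omega)).le

end Qfun

lemma one_sub_pow_le_exp_neg_mul {x c : ℝ} (hcx : c ≤ x) (hx : x ≤ 1) (M : ℕ) :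
    (1 - x) ^ M ≤ exp (-(M * c)) := by
  calc (1 - x) ^ M ≤ exp (-c) ^ M :=
        pow_le_pow_left₀ (by linarith)
          ((by linarith : 1 - x ≤ 1 - c).trans (one_sub_le_exp_neg c)) M
    _ = exp (-(M * c)) := by rw [← exp_nat_mul, mul_neg]

lemma one_sub_one_sub_pow_le_mul {x : ℝ} (hx : x ≤ 2) (M : ℕ) :
    1 - (1 - x) ^ M ≤ M * x := by
  have := one_add_mul_le_pow (by linarith : -2 ≤ -x) M
  rw [← sub_eq_add_neg] at this
  linarith

theorem stmt16_general (M : ℕ) (s : ℝ) (hs : s ∈ Set.Icc (0 : ℝ) 1) :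
    (∀ n : ℕ, 2 ≤ n →
      (1 - Qfun n s) ^ M ≤
        Real.exp (-((M : ℝ) * kappaConst n / ((n : ℝ) - 1)) *
          (1 - s ^ 2) ^ (((n : ℝ) - 1) / 2))) ∧
    (∀ n : ℕ, 3 ≤ n →
      1 - (1 - Qfun n s) ^ M ≤
        (M : ℝ) * kappaConst n * (1 - s ^ 2) ^ (((n : ℝ) - 1) / 2)) := by
  refine ⟨fun n hn ↦ ?_, fun n hn ↦ ?_⟩
  · calc (1 - Qfun n s) ^ M
        ≤ exp (-(M * (kappaConst n / ((n : ℝ) - 1) * (1 - s ^ 2) ^ (((n : ℝ) - 1) / 2)))) :=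
          one_sub_pow_le_exp_neg_mul (kappaConst_div_mul_le_Qfun hn hs)
            ((Qfun_le_half hn hs).trans (by norm_num)) M
      _ = _ := by ring_nf
  · calc 1 - (1 - Qfun n s) ^ M ≤ M * Qfun n s :=
          one_sub_one_sub_pow_le_mul ((Qfun_le_half (by omega) hs).trans (by norm_num)) M
      _ ≤ M * (kappaConst n * (1 - s ^ 2) ^ (((n : ℝ) - 1) / 2)) := by
          gcongr
          exact Qfun_le_kappaConst_mul hn hs
      _ = _ := by ring

/-- Tail bounds for the maximum `S` of `M` i.i.d. cosine
similarities, whose CDF is `(1 - Q_n(s))^M`: for `s ∈ [0,1]`,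
(i) for `n ≥ 2`, `P(S ≤ s) = (1-Q_n(s))^M ≤ exp(-(Mκ_n/(n-1))(1-s²)^{(n-1)/2})`;
(ii) for `n ≥ 3`, `P(S ≥ s) = 1-(1-Q_n(s))^M ≤ Mκ_n(1-s²)^{(n-1)/2}`. -/
theorem stmt16 (R : ℝ) (hR : 0 < R) (M : ℕ) (hM : 1 ≤ M)
    (s : ℝ) (hs : s ∈ Set.Icc (0 : ℝ) 1) :
    (∀ n : ℕ, 2 ≤ n →
      (1 - Qfun n s) ^ M ≤
        Real.exp (-((M : ℝ) * kappaConst n / ((n : ℝ) - 1)) *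
          (1 - s ^ 2) ^ (((n : ℝ) - 1) / 2))) ∧
    (∀ n : ℕ, 3 ≤ n →
      1 - (1 - Qfun n s) ^ M ≤
        (M : ℝ) * kappaConst n * (1 - s ^ 2) ^ (((n : ℝ) - 1) / 2)) :=
  stmt16_general M s hs
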